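/- Let n ≥ 3 be an integer. The independence number of the permutability graph of non-normal subgroups Γ_N(D_n) of the dihedral group D_n equals n if n is odd, and equals n/2 if n is even. -/

import Mathlib

open scoped Pointwise

/-- The permutability graph of non-normal subgroups `Γ_N(G)`: vertices are the
non-normal (hence proper) subgroups of `G`, and two distinct vertices are adjacent
iff the corresponding subgroups permute, i.e. `HK = KH` as subsets of `G`. -/
def permGraphN (G : Type*) [Group G] :
    SimpleGraph {H : Subgroup G // ¬ H.Normal} where
  Adj H K := H ≠ K ∧ (H.1 : Set G) * (K.1 : Set G) = (K.1 : Set G) * (H.1 : Set G)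
  symm := ⟨fun _ _ ⟨hne, h⟩ => ⟨hne.symm, h.symm⟩⟩
  loopless := ⟨fun _ ⟨hne, _⟩ => hne rfl⟩

/-- The permutability graph of subgroups `Γ(G)`: vertices are the proper nontrivial
subgroups of `G`, and two distinct vertices are adjacent iff the corresponding
subgroups permute, i.e. `HK = KH` as subsets of `G`. -/
def permGraph (G : Type*) [Group G] :
    SimpleGraph {H : Subgroup G // H ≠ ⊥ ∧ H ≠ ⊤} where
  Adj H K := H ≠ K ∧ (H.1 : Set G) * (K.1 : Set G) = (K.1 : Set G) * (H.1 : Set G)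
  symm := ⟨fun _ _ ⟨hne, h⟩ => ⟨hne.symm, h.symm⟩⟩
  loopless := ⟨fun _ ⟨hne, _⟩ => hne rfl⟩

/-- A set of vertices is independent if no two of its members are adjacent. -/
def IsIndepSet {V : Type*} (G : SimpleGraph V) (s : Set V) : Prop :=
  s.Pairwise fun u v => ¬ G.Adj u v

/-- The independence number of a graph: the largest cardinality of an
independent set of vertices. -/
noncomputable def indepNum {V : Type*} (G : SimpleGraph V) : ℕ :=
  sSup {k | ∃ s : Set V, IsIndepSet G s ∧ s.ncard = k}

/-
Every non-normal subgroup of `D_n` contains a reflection `sr i`, and two subgroups containing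
reflections `sr i`, `sr j` with `2 i = 2 j` permute. Conversely, `⟨sr i⟩` and `⟨sr j⟩` do not
permute when `2 i ≠ 2 j`, and these subgroups are non-normal once `n ≥ 3`. Hence the independence
number of `Γ_N(D_n)` is the number of values of `2 i` in `ZMod n`, which is the additive order
`n / gcd(n, 2)` of `2`.
-/

lemma indepNum_eq_of_forall {V : Type*} {G : SimpleGraph V} {k : ℕ}
    (hex : ∃ s, IsIndepSet G s ∧ s.ncard = k) (hle : ∀ s, IsIndepSet G s → s.ncard ≤ k) :
    indepNum G = k :=
  IsGreatest.csSup_eq ⟨hex, by rintro _ ⟨s, hs, rfl⟩; exact hle s hs⟩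

namespace ZMod

lemma range_two_mul (n : ℕ) :
    Set.range (fun i : ZMod n => 2 * i) = AddSubgroup.zmultiples (2 : ZMod n) := by
  ext x
  simp only [Set.mem_range, SetLike.mem_coe, AddSubgroup.mem_zmultiples_iff, zsmul_eq_mul]
  constructor
  · rintro ⟨i, rfl⟩
    exact ⟨i.cast, by rw [ZMod.intCast_zmod_cast, mul_comm]⟩
  · rintro ⟨k, rfl⟩
    exact ⟨k, mul_comm _ _⟩

lemma card_range_two_mul (n : ℕ) [NeZero n] :
    Nat.card (Set.range fun i : ZMod n => 2 * i) = if Odd n then n else n / 2 := by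
  rw [range_two_mul, SetLike.coe_sort_coe, Nat.card_zmultiples, ← Nat.cast_ofNat,
    addOrderOf_coe _ (NeZero.ne n)]
  split_ifs with h
  · rw [h.coprime_two_right.gcd_eq_one, Nat.div_one]
  · rw [Nat.gcd_eq_right (Nat.not_odd_iff_even.mp h).two_dvd]

end ZMod

namespace DihedralGroup

variable {n : ℕ}

lemma mem_zpowers_sr {i : ZMod n} {x : DihedralGroup n} :
    x ∈ Subgroup.zpowers (sr i) ↔ x = 1 ∨ x = sr i := by
  classical
  have hfin : IsOfFinOrder (sr i) := orderOf_pos_iff.mp (by rw [orderOf_sr]; norm_num)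
  rw [hfin.mem_zpowers_iff_mem_range_orderOf, orderOf_sr]
  simp [Finset.range_add_one, or_comm]

lemma exists_sr_mem_of_not_normal {H : Subgroup (DihedralGroup n)} (h : ¬ H.Normal) :
    ∃ i, sr i ∈ H := by
  by_contra! hr
  refine h ⟨?_⟩
  rintro (i | i) hi (j | j)
  · simpa [r_mul_r, inv_r] using hi
  · simpa using inv_mem hi
  all_goals exact absurd hi (hr i)

lemma sr_ne_one (i : ZMod n) : sr i ≠ 1 := by
  rw [one_def]
  nofun

lemma zpowers_sr_not_normal (h2 : (2 : ZMod n) ≠ 0) (i : ZMod n) :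
    ¬ (Subgroup.zpowers (sr i)).Normal := by
  intro hN
  have hconj := hN.conj_mem _ (Subgroup.mem_zpowers _) (r 1)
  rw [inv_r, r_mul_sr, sr_mul_r, mem_zpowers_sr] at hconj
  rcases hconj with h | h
  · exact sr_ne_one _ h
  · exact h2 (by linear_combination -(sr.inj h))

lemma coe_mul_subset_of_sr_mem {H K : Subgroup (DihedralGroup n)} {i j : ZMod n}
    (hi : sr i ∈ H) (hj : sr j ∈ K) (h : 2 * i = 2 * j) :
    (K : Set (DihedralGroup n)) * H ⊆ H * K := by
  intro z hz
  obtain ⟨k, hk, g, hg, rfl⟩ := Set.mem_mul.1 hz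
  rw [SetLike.mem_coe] at hg hk
  refine Set.mem_mul.2 ?_
  obtain (a | a) := g <;> obtain (b | b) := k
  · exact ⟨r a, hg, r b, hk, by rw [r_mul_r, r_mul_r, add_comm]⟩
  · exact ⟨(r a)⁻¹, inv_mem hg, sr b, hk, by rw [inv_r, r_mul_sr, sr_mul_r]; ring_nf⟩
  · exact ⟨sr a, hg, (r b)⁻¹, inv_mem hk, by rw [inv_r, sr_mul_r, r_mul_sr]; ring_nf⟩
  · -- conjugating by `sr i` and `sr j` gives `sr b * sr a` exactly because `2 i = 2 j`
    refine ⟨sr i * sr a * sr i, mul_mem (mul_mem hi hg) hi,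
      sr j * sr b * sr j, mul_mem (mul_mem hj hk) hj, ?_⟩
    simp only [sr_mul_sr, r_mul_sr]
    congr 1
    linear_combination -h

lemma coe_mul_comm_of_sr_mem {H K : Subgroup (DihedralGroup n)} {i j : ZMod n}
    (hi : sr i ∈ H) (hj : sr j ∈ K) (h : 2 * i = 2 * j) :
    (H : Set (DihedralGroup n)) * K = K * H :=
  (coe_mul_subset_of_sr_mem hj hi h.symm).antisymm (coe_mul_subset_of_sr_mem hi hj h)

lemma coe_zpowers_sr_mul_ne {i j : ZMod n} (h : 2 * i ≠ 2 * j) :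
    (Subgroup.zpowers (sr i) : Set (DihedralGroup n)) * Subgroup.zpowers (sr j) ≠
      Subgroup.zpowers (sr j) * Subgroup.zpowers (sr i) := by
  intro hcomm
  have hmem : sr i * sr j ∈
      (Subgroup.zpowers (sr j) : Set (DihedralGroup n)) * Subgroup.zpowers (sr i) :=
    hcomm ▸ Set.mul_mem_mul (Subgroup.mem_zpowers _) (Subgroup.mem_zpowers _)
  obtain ⟨x, hx, y, hy, hxy⟩ := Set.mem_mul.1 hmem
  rw [SetLike.mem_coe, mem_zpowers_sr] at hx hy
  rw [sr_mul_sr] at hxy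
  rcases hx with rfl | rfl <;> rcases hy with rfl | rfl
  · rw [one_mul, one_def, r.injEq] at hxy
    exact h (by linear_combination 2 * hxy)
  · rw [one_mul] at hxy
    exact nomatch hxy
  · rw [mul_one] at hxy
    exact nomatch hxy
  · rw [sr_mul_sr, r.injEq] at hxy
    exact h (by linear_combination hxy)

lemma ncard_le_of_isIndepSet [NeZero n] {s : Set {H : Subgroup (DihedralGroup n) // ¬ H.Normal}}
    (hs : IsIndepSet (permGraphN (DihedralGroup n)) s) :
    s.ncard ≤ Nat.card (Set.range fun i : ZMod n => 2 * i) := by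
  choose axis haxis using fun H : {H : Subgroup (DihedralGroup n) // ¬ H.Normal} =>
    exists_sr_mem_of_not_normal H.2
  rw [Nat.card_coe_set_eq]
  refine Set.ncard_le_ncard_of_injOn (fun H => 2 * axis H) (fun H _ => ⟨axis H, rfl⟩) ?_
  intro H hH K hK h
  by_contra hne
  exact hs hH hK hne ⟨hne, coe_mul_comm_of_sr_mem (haxis H) (haxis K) h⟩

lemma exists_isIndepSet_ncard_eq (h2 : (2 : ZMod n) ≠ 0) :
    ∃ s, IsIndepSet (permGraphN (DihedralGroup n)) s ∧
      s.ncard = Nat.card (Set.range fun i : ZMod n => 2 * i) := by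
  let half := Set.rangeSplitting fun i : ZMod n => 2 * i
  let φ : Set.range (fun i : ZMod n => 2 * i) → {H : Subgroup (DihedralGroup n) // ¬ H.Normal} :=
    fun t => ⟨Subgroup.zpowers (sr (half t)), zpowers_sr_not_normal h2 _⟩
  have hperm : ∀ t u, t ≠ u →
      ((φ t).1 : Set (DihedralGroup n)) * (φ u).1 ≠ (φ u).1 * (φ t).1 := fun t u htu =>
    coe_zpowers_sr_mul_ne (by
      simpa only [half, Set.apply_rangeSplitting] using Subtype.coe_injective.ne htu)
  have hinj : φ.Injective := fun t u htu => by_contra fun hne => hperm t u hne (htu ▸ rfl)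
  refine ⟨Set.range φ, ?_, Set.ncard_range_of_injective hinj⟩
  rintro _ ⟨t, rfl⟩ _ ⟨u, rfl⟩ hne ⟨-, hcomm⟩
  exact hperm t u (fun h => hne (h ▸ rfl)) hcomm

theorem indepNum_permGraphN [NeZero n] (h2 : (2 : ZMod n) ≠ 0) :
    indepNum (permGraphN (DihedralGroup n)) = Nat.card (Set.range fun i : ZMod n => 2 * i) :=
  indepNum_eq_of_forall (exists_isIndepSet_ncard_eq h2) fun _ => ncard_le_of_isIndepSet

end DihedralGroup

/-- the independence number of `Γ_N(D_n)` is `n` for odd `n` and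
`n/2` for even `n`. -/
theorem stmt_1 (n : ℕ) (hn : 3 ≤ n) :
    indepNum (permGraphN (DihedralGroup n)) = if Odd n then n else n / 2 := by
  have : NeZero n := ⟨by omega⟩
  have h2 : (2 : ZMod n) ≠ 0 := by
    rw [← Nat.cast_ofNat, Ne, ZMod.natCast_eq_zero_iff]
    exact fun h => by have := Nat.le_of_dvd two_pos h; omega
  rw [DihedralGroup.indepNum_permGraphN h2, ZMod.card_range_two_mul]
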